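/- Semantic promotion for banged contexts: if !Γ ⊩ φ (valid in all bases with empty resource multiset) then !Γ ⊩ !φ. -/

import Mathlib

abbrev Atom := ℕ
abbrev ASeq := Multiset Atom × Atom
abbrev Box := Multiset ASeq
abbrev ARule := Multiset Box × Box × Atom
abbrev Base := Set ARule

/-- An atom `d` is persistent in `B` if there is a rule `⟨∅, S, d⟩ ∈ B` with `S` nonempty. -/
def Persistent (B : Base) (d : Atom) : Prop :=
  ∃ S : Box, S ≠ 0 ∧ ((0 : Multiset Box), S, d) ∈ B

/-- Atomic derivability in a base. -/
inductive Deriv (B : Base) : Multiset Atom → Atom → Prop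
  | ref (p : Atom) : Deriv B {p} p
  | app (S : Box) (p : Atom)
      (bc : List (Box × Multiset Atom))
      (dc : List (Atom × Multiset Atom))
      (hrule : ((↑(bc.map Prod.fst) : Multiset Box), S, p) ∈ B)
      (hpers : ∀ x ∈ dc, Persistent B x.1)
      (hbox : ∀ x ∈ bc, ∀ s ∈ x.1, Deriv B (x.2 + s.1) s.2)
      (hd : ∀ x ∈ dc, Deriv B x.2 x.1)
      (hS : ∀ s ∈ S, Deriv B ((↑(dc.map Prod.fst) : Multiset Atom) + s.1) s.2) :
      Deriv B ((bc.map Prod.snd).sum + (dc.map Prod.snd).sum) p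

/-- Formulas of intuitionistic linear logic. -/
inductive Fml : Type
  | atom : Atom → Fml
  | top : Fml
  | zero : Fml
  | one : Fml
  | limp : Fml → Fml → Fml
  | tens : Fml → Fml → Fml
  | wth : Fml → Fml → Fml
  | plus : Fml → Fml → Fml
  | bang : Fml → Fml
deriving DecidableEq

/-- The degree of a formula. -/
def deg : Fml → ℕ
  | .atom _ => 1
  | .top => 2
  | .zero => 2
  | .one => 2
  | .limp φ ψ => deg φ + deg ψ + 1
  | .tens φ ψ => deg φ + deg ψ + 1
  | .wth φ ψ => deg φ + deg ψ + 1
  | .plus φ ψ => deg φ + deg ψ + 1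
  | .bang φ => deg φ + 1

theorem one_le_deg (φ : Fml) : 1 ≤ deg φ := by
  cases φ <;> simp [deg] <;> omega

mutual
  /-- Support `⊩_B^L φ` (empty left-hand side). -/
  def Supp : Base → Multiset Atom → Fml → Prop
    | B, L, .atom p => Deriv B L p
    | _, _, .top => True
    | B, L, .zero => ∀ (K : Multiset Atom) (p : Atom), Supp B (L + K) (.atom p)
    | B, L, .one => ∀ C : Base, B ⊆ C → ∀ (K : Multiset Atom) (p : Atom),
        Supp C K (.atom p) → Supp C (L + K) (.atom p)
    | B, L, .limp φ ψ => SuppInf1 B L φ ψ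
    | B, L, .tens φ ψ => ∀ C : Base, B ⊆ C → ∀ (K : Multiset Atom) (p : Atom),
        SuppInf2 C K φ ψ (.atom p) → Supp C (L + K) (.atom p)
    | B, L, .wth φ ψ => Supp B L φ ∧ Supp B L ψ
    | B, L, .plus φ ψ => ∀ C : Base, B ⊆ C → ∀ (K : Multiset Atom) (p : Atom),
        SuppInf1 C K φ (.atom p) → SuppInf1 C K ψ (.atom p) → Supp C (L + K) (.atom p)
    | B, L, .bang φ => ∀ C : Base, B ⊆ C → ∀ (K : Multiset Atom) (p : Atom),
        (∀ D : Base, C ⊆ D → Supp D 0 φ → Supp D K (.atom p)) → Supp C (L + K) (.atom p)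
  termination_by B L φ => 2 * deg φ
  decreasing_by
    all_goals
      try simp only [deg]
      try have h1 := one_le_deg φ
      try have h2 := one_le_deg ψ
      try have h3 := one_le_deg χ
      try have h4 := one_le_deg α
      try have h5 := one_le_deg β
      omega

  /-- The (Inf) clause for a singleton context `{φ} ⊩_B^L χ`. -/
  def SuppInf1 : Base → Multiset Atom → Fml → Fml → Prop
    | B, L, .bang α, χ => ∀ C : Base, B ⊆ C → Supp C 0 α → Supp C L χ
    | B, L, φ, χ => ∀ C : Base, B ⊆ C → ∀ K : Multiset Atom,
        Supp C K φ → Supp C (L + K) χ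
  termination_by B L φ χ => 2 * (deg φ + deg χ) - 1
  decreasing_by
    all_goals
      try simp only [deg]
      try have h1 := one_le_deg φ
      try have h2 := one_le_deg ψ
      try have h3 := one_le_deg χ
      try have h4 := one_le_deg α
      try have h5 := one_le_deg β
      omega

  /-- The (Inf) clause for a two-element context `{φ, ψ} ⊩_B^L χ`. -/
  def SuppInf2 : Base → Multiset Atom → Fml → Fml → Fml → Prop
    | B, L, .bang α, .bang β, χ => ∀ C : Base, B ⊆ C →
        Supp C 0 α → Supp C 0 β → Supp C L χ
    | B, L, .bang α, ψ, χ => ∀ C : Base, B ⊆ C → ∀ K : Multiset Atom,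
        Supp C 0 α → Supp C K ψ → Supp C (L + K) χ
    | B, L, φ, .bang β, χ => ∀ C : Base, B ⊆ C → ∀ K : Multiset Atom,
        Supp C 0 β → Supp C K φ → Supp C (L + K) χ
    | B, L, φ, ψ, χ => ∀ C : Base, B ⊆ C → ∀ K₁ K₂ : Multiset Atom,
        Supp C K₁ φ → Supp C K₂ ψ → Supp C (L + K₁ + K₂) χ
  termination_by B L φ ψ χ => 2 * (deg φ + deg ψ + deg χ) - 1
  decreasing_by
    all_goals
      try simp only [deg]
      try have h1 := one_le_deg φ
      try have h2 := one_le_deg ψ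
      try have h3 := one_le_deg χ
      try have h4 := one_le_deg α
      try have h5 := one_le_deg β
      omega
end

/-- Is the formula a `!`-formula? -/
def isBang : Fml → Bool
  | .bang _ => true
  | _ => false

/-- Strip a top-level `!`. -/
def unbang : Fml → Fml
  | .bang φ => φ
  | φ => φ

/-- Support for a multiset of formulas: the `(⊎)` clause. -/
def SuppMS (B : Base) (L : Multiset Atom) (Γ : Multiset Fml) : Prop :=
  ∃ l : List (Fml × Multiset Atom), (↑(l.map Prod.fst) : Multiset Fml) = Γ ∧
    (l.map Prod.snd).sum = L ∧ ∀ x ∈ l, Supp B x.2 x.1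

/-- The official (Inf) clause: `Γ ⊩_B^L φ`, where `Γ = !Δ ⊎ Θ`. -/
def SuppSeq (B : Base) (L : Multiset Atom) (Γ : Multiset Fml) (φ : Fml) : Prop :=
  ∀ C : Base, B ⊆ C → ∀ K : Multiset Atom,
    SuppMS C 0 ((Γ.filter (fun ψ => isBang ψ = true)).map unbang) →
    SuppMS C K (Γ.filter (fun ψ => isBang ψ = false)) →
    Supp C (L + K) φ

/-- Validity of a sequent `(Γ : φ)`. -/
def Valid (Γ : Multiset Fml) (φ : Fml) : Prop :=
  ∀ B : Base, SuppSeq B 0 Γ φ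


theorem Deriv.mono {B C : Base} (hBC : B ⊆ C) {L : Multiset Atom} {p : Atom}
    (h : Deriv B L p) : Deriv C L p := by
  induction h with
  | ref p => exact .ref p
  | app S p bc dc hrule hpers _ _ _ ihbox ihd ihS =>
      exact .app S p bc dc (hBC hrule)
        (fun x hx => (hpers x hx).imp fun _ hS => ⟨hS.1, hBC hS.2⟩) ihbox ihd ihS

theorem SuppInf1.mono {B C : Base} (hBC : B ⊆ C) {L : Multiset Atom} {φ χ : Fml}
    (h : SuppInf1 B L φ χ) : SuppInf1 C L φ χ := by
  cases φ <;> unfold SuppInf1 at h ⊢ <;> exact fun D hCD => h D (hBC.trans hCD)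

theorem Supp.mono {B C : Base} (hBC : B ⊆ C) {L : Multiset Atom} {φ : Fml}
    (h : Supp B L φ) : Supp C L φ := by
  induction φ generalizing L with
  | atom p => rw [Supp] at h ⊢; exact h.mono hBC
  | top => rw [Supp]; trivial
  | zero =>
      rw [Supp] at h ⊢
      intro K p
      have hp := h K p
      rw [Supp] at hp ⊢
      exact hp.mono hBC
  | limp φ ψ => rw [Supp] at h ⊢; exact h.mono hBC
  | wth φ ψ ihφ ihψ => rw [Supp] at h ⊢; exact ⟨ihφ h.1, ihψ h.2⟩
  | one | tens | plus | bang =>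
      rw [Supp] at h ⊢; exact fun D hCD => h D (hBC.trans hCD)

theorem SuppMS.mono {B C : Base} (hBC : B ⊆ C) {L : Multiset Atom} {Γ : Multiset Fml}
    (h : SuppMS B L Γ) : SuppMS C L Γ := by
  obtain ⟨l, hΓ, hL, hl⟩ := h
  exact ⟨l, hΓ, hL, fun x hx => (hl x hx).mono hBC⟩

theorem suppMS_zero_iff {B : Base} {L : Multiset Atom} : SuppMS B L 0 ↔ L = 0 := by
  constructor
  · rintro ⟨l, hΓ, hL, -⟩
    obtain rfl : l = [] := by simpa using hΓ
    exact hL.symm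
  · rintro rfl
    exact ⟨[], rfl, rfl, by simp⟩

/-- The `!` clause consults `φ` only at empty resources in extensions of `B`, where monotonicity
supplies it. -/
theorem Supp.bang {B : Base} {φ : Fml} (h : Supp B 0 φ) : Supp B 0 (.bang φ) := by
  rw [Supp]
  intro C hBC K p hφ
  simpa using hφ C subset_rfl (h.mono hBC)

theorem suppSeq_map_bang_iff {B : Base} {L : Multiset Atom} {Γ : Multiset Fml} {φ : Fml} :
    SuppSeq B L (Γ.map Fml.bang) φ ↔ ∀ C : Base, B ⊆ C → SuppMS C 0 Γ → Supp C L φ := by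
  have hbang : (Γ.map Fml.bang).filter (fun ψ => isBang ψ = true) = Γ.map Fml.bang :=
    Multiset.filter_eq_self.mpr fun ψ hψ => by
      obtain ⟨_, _, rfl⟩ := Multiset.mem_map.mp hψ; rfl
  have hlinear : (Γ.map Fml.bang).filter (fun ψ => isBang ψ = false) = 0 :=
    Multiset.filter_eq_nil.mpr fun ψ hψ => by
      obtain ⟨_, _, rfl⟩ := Multiset.mem_map.mp hψ; simp [isBang]
  have hunbang : (Γ.map Fml.bang).map unbang = Γ := by
    rw [Multiset.map_map]; exact Multiset.map_id' Γ
  simp only [SuppSeq, hbang, hlinear, hunbang, suppMS_zero_iff]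
  exact ⟨fun h C hBC hΓ => by simpa using h C hBC 0 hΓ rfl,
    fun h C hBC K hΓ hK => by simpa [hK] using h C hBC hΓ⟩

theorem semantic_promotion (Γ : Multiset Fml) (φ : Fml)
    (h : Valid (Γ.map Fml.bang) φ) : Valid (Γ.map Fml.bang) (.bang φ) := by
  intro B
  rw [suppSeq_map_bang_iff]
  intro C hBC hΓ
  exact (suppSeq_map_bang_iff.mp (h B) C hBC hΓ).bang
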